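/- Fix arbitrary real u⃗ and s₁ < ⋯ < s_m. Let 𝓗₁ be as above. Then the limit as u₁ → −∞ of 𝓗₁(t; u⃗, s⃗) equals (1/2)[2 − erfc(t − s_m)] + Σ_{ℓ=2}^m (e^{u_ℓ + ⋯ + u_m}/2)[erfc(t − s_ℓ) − erfc(t − s_{ℓ−1})], and each of the m terms on the right-hand side is strictly positive. -/

import Mathlib

open MeasureTheory Real Filter Finset

noncomputable def erfc (t : ℝ) : ℝ :=
  (2 / Real.sqrt Real.pi) * ∫ x in Set.Ioi t, Real.exp (-x ^ 2)

lemma gauss_int : Integrable (fun x : ℝ => Real.exp (-x ^ 2)) := by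
  simpa using integrable_exp_neg_mul_sq (one_pos : (0:ℝ) < 1)

lemma gauss_pos_on (s : Set ℝ) (hs : MeasurableSet s) (hμ : 0 < (volume : Measure ℝ) s) :
    0 < ∫ x in s, Real.exp (-x ^ 2) := by
  rw [setIntegral_pos_iff_support_of_nonneg_ae]
  · have : Function.support (fun x : ℝ => Real.exp (-x ^ 2)) = Set.univ := by
      ext x; simp [Real.exp_ne_zero]
    rwa [this, Set.univ_inter]
  · exact Eventually.of_forall fun x => (Real.exp_pos _).le
  · exact gauss_int.integrableOn

lemma two_div_sqrt_pi_pos : 0 < 2 / Real.sqrt Real.pi := by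
  positivity

lemma erfc_pos (t : ℝ) : 0 < erfc t := by
  refine mul_pos two_div_sqrt_pi_pos (gauss_pos_on _ measurableSet_Ioi ?_)
  simp [Real.volume_Ioi]

lemma erfc_sub (a b : ℝ) (hab : a < b) :
    erfc a - erfc b = (2 / Real.sqrt Real.pi) * ∫ x in Set.Ioc a b, Real.exp (-x ^ 2) := by
  have h : (∫ x in Set.Ioc a b, Real.exp (-x ^ 2)) + (∫ x in Set.Ioi b, Real.exp (-x ^ 2))
      = ∫ x in Set.Ioi a, Real.exp (-x ^ 2) := by
    rw [← setIntegral_union (Set.Ioc_disjoint_Ioi le_rfl) measurableSet_Ioi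
      gauss_int.integrableOn gauss_int.integrableOn, Set.Ioc_union_Ioi_eq_Ioi hab.le]
  unfold erfc
  rw [← h]; ring

lemma erfc_strict_anti (a b : ℝ) (hab : a < b) : erfc b < erfc a := by
  have := erfc_sub a b hab
  have hpos : 0 < (2 / Real.sqrt Real.pi) * ∫ x in Set.Ioc a b, Real.exp (-x ^ 2) := by
    refine mul_pos two_div_sqrt_pi_pos (gauss_pos_on _ measurableSet_Ioc ?_)
    simp [Real.volume_Ioc, hab]
  linarith

lemma erfc_lt_two (t : ℝ) : erfc t < 2 := by
  have h : (∫ x in Set.Iic t, Real.exp (-x ^ 2)) + (∫ x in Set.Ioi t, Real.exp (-x ^ 2))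
      = ∫ x : ℝ, Real.exp (-x ^ 2) :=
    intervalIntegral.integral_Iic_add_Ioi gauss_int.integrableOn gauss_int.integrableOn
  have htot : (∫ x : ℝ, Real.exp (-x ^ 2)) = Real.sqrt Real.pi := by
    simpa using integral_gaussian 1
  have hIic : 0 < ∫ x in Set.Iic t, Real.exp (-x ^ 2) := by
    refine gauss_pos_on _ measurableSet_Iic ?_
    simp [Real.volume_Iic]
  have hsp : 0 < Real.sqrt Real.pi := Real.sqrt_pos.2 Real.pi_pos
  have : erfc t = (2 / Real.sqrt Real.pi) * (Real.sqrt Real.pi - ∫ x in Set.Iic t, Real.exp (-x ^ 2)) := by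
    unfold erfc; rw [← htot, ← h]; ring
  rw [this]
  have h2 : (2 / Real.sqrt Real.pi) * Real.sqrt Real.pi = 2 := by
    field_simp
  nlinarith [mul_pos two_div_sqrt_pi_pos hIic]

lemma alg (k : ℕ) (E c : ℕ → ℝ) (hE : E (k+1) = 1) :
    1 - E 1 * c 0 / 2 + ∑ i ∈ Finset.range k, ((E (i+1) - E (i+2))/2) * c (i+1)
    = 1/2 * (2 - c k) + ∑ i ∈ Finset.range k, E (i+1)/2 * (c (i+1) - c i) := by
  have tele : ∑ i ∈ Finset.range k, (E (i+1) * c i - E (i+2) * c (i+1))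
      = E 1 * c 0 - E (k+1) * c k :=
    Finset.sum_range_sub' (fun i => E (i+1) * c i) k
  have hdiff : ∑ i ∈ Finset.range k, (((E (i+1) - E (i+2))/2) * c (i+1) - E (i+1)/2 * (c (i+1) - c i))
      = ∑ i ∈ Finset.range k, (E (i+1) * c i - E (i+2) * c (i+1)) / 2 := by
    apply Finset.sum_congr rfl; intros; ring
  rw [Finset.sum_sub_distrib, ← Finset.sum_div, tele, hE] at hdiff
  linarith

noncomputable def Efun (k : ℕ) (u : Fin (k+1) → ℝ) (n : ℕ) : ℝ :=
  Real.exp (∑ j ∈ Finset.univ.filter (fun j : Fin (k+1) => n ≤ (j : ℕ)), u j)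

noncomputable def cfun (k : ℕ) (t : ℝ) (s : Fin (k+1) → ℝ) (i : ℕ) : ℝ :=
  erfc (t - s ⟨min i k, by omega⟩)

variable {k : ℕ} {t : ℝ} {u s : Fin (k+1) → ℝ}

lemma Ek1 : Efun k u (k+1) = 1 := by
  unfold Efun
  have hemp : Finset.univ.filter (fun j : Fin (k+1) => k+1 ≤ (j : ℕ)) = ∅ := by
    apply Finset.filter_false_of_mem
    intro j _
    have := j.isLt
    omega
  rw [hemp, Finset.sum_empty, Real.exp_zero]

lemma EA : Efun k u 1
    = Real.exp (∑ j ∈ Finset.univ.filter (fun j : Fin (k+1) => (0 : Fin (k+1)) < j), u j) := by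
  unfold Efun
  have h : Finset.univ.filter (fun j : Fin (k+1) => 1 ≤ (j : ℕ))
      = Finset.univ.filter (fun j : Fin (k+1) => (0 : Fin (k+1)) < j) := by
    apply Finset.filter_congr
    intro j _
    rw [Fin.lt_def, Fin.val_zero]; omega
  rw [h]

lemma Elt (i : Fin k) : Efun k u ((i : ℕ)+2)
    = Real.exp (∑ j ∈ Finset.univ.filter (fun j : Fin (k+1) => i.succ < j), u j) := by
  unfold Efun
  have h : Finset.univ.filter (fun j : Fin (k+1) => (i : ℕ)+2 ≤ (j : ℕ))
      = Finset.univ.filter (fun j : Fin (k+1) => i.succ < j) := by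
    apply Finset.filter_congr
    intro j _
    simp only [Fin.lt_def, Fin.val_succ, eq_iff_iff]
    omega
  rw [h]

lemma Ele (i : Fin k) : Efun k u ((i : ℕ)+1)
    = Real.exp (∑ j ∈ Finset.univ.filter (fun j : Fin (k+1) => i.succ ≤ j), u j) := by
  unfold Efun
  have h : Finset.univ.filter (fun j : Fin (k+1) => (i : ℕ)+1 ≤ (j : ℕ))
      = Finset.univ.filter (fun j : Fin (k+1) => i.succ ≤ j) := by
    apply Finset.filter_congr
    intro j _
    simp only [Fin.le_def, Fin.val_succ, eq_iff_iff]
  rw [h]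

lemma Estep (i : Fin k) :
    Efun k u ((i : ℕ)+1) = Real.exp (u i.succ) * Efun k u ((i : ℕ)+2) := by
  unfold Efun
  rw [← Real.exp_add]
  congr 1
  have hins : Finset.univ.filter (fun j : Fin (k+1) => (i : ℕ) + 1 ≤ (j : ℕ))
      = insert i.succ (Finset.univ.filter (fun j : Fin (k+1) => (i : ℕ) + 2 ≤ (j : ℕ))) := by
    ext j
    simp only [Finset.mem_insert, Finset.mem_filter, Finset.mem_univ, true_and]
    constructor
    · intro h
      rcases eq_or_lt_of_le h with h' | h'
      · left; apply Fin.ext; simp [← h']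
      · right; omega
    · rintro (rfl | h)
      · simp
      · omega
  rw [hins, Finset.sum_insert (by simp)]

lemma cf0 : cfun k t s 0 = erfc (t - s 0) := by
  unfold cfun
  have h : (⟨min 0 k, by omega⟩ : Fin (k+1)) = 0 := by apply Fin.ext; simp
  rw [h]

lemma cfk : cfun k t s k = erfc (t - s (Fin.last k)) := by
  unfold cfun
  have h : (⟨min k k, by omega⟩ : Fin (k+1)) = Fin.last k := by
    apply Fin.ext; simp [Fin.last]
  rw [h]

lemma cfsucc (i : Fin k) : cfun k t s ((i : ℕ)+1) = erfc (t - s i.succ) := by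
  unfold cfun
  have h : (⟨min ((i : ℕ)+1) k, by omega⟩ : Fin (k+1)) = i.succ := by
    apply Fin.ext
    have := i.isLt
    simp only [Fin.val_succ]
    omega
  rw [h]

lemma cfcast (i : Fin k) : cfun k t s (i : ℕ) = erfc (t - s i.castSucc) := by
  unfold cfun
  have h : (⟨min (i : ℕ) k, by omega⟩ : Fin (k+1)) = i.castSucc := by
    apply Fin.ext
    have := i.isLt
    simp only [Fin.coe_castSucc]
    omega
  rw [h]

lemma ident (k : ℕ) (t : ℝ) (u s : Fin (k+1) → ℝ) :
    (1 / 2) * (2 - erfc (t - s (Fin.last k))) +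
      ∑ i : Fin k,
        (Real.exp (∑ j ∈ Finset.univ.filter (fun j : Fin (k + 1) => i.succ ≤ j), u j) / 2) *
          (erfc (t - s i.succ) - erfc (t - s i.castSucc))
    = 1 - Real.exp (∑ j ∈ Finset.univ.filter
          (fun j : Fin (k+1) => (0 : Fin (k+1)) < j), u j) / 2 * erfc (t - s 0)
      + ∑ i : Fin k, ((Real.exp (u i.succ) - 1) / 2) *
          Real.exp (∑ j ∈ Finset.univ.filter (fun j : Fin (k+1) => i.succ < j), u j) *
          erfc (t - s i.succ) := by
  have h1 : ∑ i : Fin k,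
      (Real.exp (∑ j ∈ Finset.univ.filter (fun j : Fin (k + 1) => i.succ ≤ j), u j) / 2) *
        (erfc (t - s i.succ) - erfc (t - s i.castSucc))
      = ∑ i ∈ Finset.range k, Efun k u (i+1)/2 * (cfun k t s (i+1) - cfun k t s i) := by
    rw [← Fin.sum_univ_eq_sum_range (fun i => Efun k u (i+1)/2 * (cfun k t s (i+1) - cfun k t s i)) k]
    apply Finset.sum_congr rfl
    intro i _
    rw [Ele i, cfsucc i, cfcast i]
  have h2 : ∑ i : Fin k, ((Real.exp (u i.succ) - 1) / 2) *
      Real.exp (∑ j ∈ Finset.univ.filter (fun j : Fin (k+1) => i.succ < j), u j) *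
      erfc (t - s i.succ)
      = ∑ i ∈ Finset.range k, ((Efun k u (i+1) - Efun k u (i+2))/2) * cfun k t s (i+1) := by
    rw [← Fin.sum_univ_eq_sum_range
      (fun i => ((Efun k u (i+1) - Efun k u (i+2))/2) * cfun k t s (i+1)) k]
    apply Finset.sum_congr rfl
    intro i _
    rw [← Elt i, cfsucc i, Estep i]
    ring
  have key := alg k (Efun k u) (cfun k t s) Ek1
  rw [h1, h2, ← EA, ← cf0, ← cfk]
  linarith

noncomputable def H1 (m : ℕ) (u s : Fin m → ℝ) (t : ℝ) : ℝ :=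
  1 + ∑ l : Fin m, ((Real.exp (u l) - 1) / 2) *
      Real.exp (∑ j ∈ Finset.univ.filter (fun j => l < j), u j) * erfc (t - s l)

theorem H1_limit_u1_atBot (k : ℕ) (t : ℝ) (u s : Fin (k + 1) → ℝ)
    (hs : StrictMono s) :
    Tendsto (fun v : ℝ => H1 (k + 1) (Function.update u 0 v) s t) atBot
      (nhds ((1 / 2) * (2 - erfc (t - s (Fin.last k))) +
        ∑ i : Fin k,
          (Real.exp (∑ j ∈ Finset.univ.filter (fun j : Fin (k + 1) => i.succ ≤ j), u j) / 2) *
            (erfc (t - s i.succ) - erfc (t - s i.castSucc)))) ∧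
    0 < (1 / 2) * (2 - erfc (t - s (Fin.last k))) ∧
    ∀ i : Fin k,
      0 < (Real.exp (∑ j ∈ Finset.univ.filter (fun j : Fin (k + 1) => i.succ ≤ j), u j) / 2) *
            (erfc (t - s i.succ) - erfc (t - s i.castSucc)) := by
  have hE2 : ∀ i : Fin k, erfc (t - s i.castSucc) < erfc (t - s i.succ) := by
    intro i
    apply erfc_strict_anti
    have : s i.castSucc < s i.succ := hs (Fin.castSucc_lt_succ : i.castSucc < i.succ)
    linarith
  refine ⟨?_, ?_, ?_⟩
  · set A : ℝ := Real.exp (∑ j ∈ Finset.univ.filter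
        (fun j : Fin (k+1) => (0 : Fin (k+1)) < j), u j) with hA
    set R : ℝ := ∑ i : Fin k, ((Real.exp (u i.succ) - 1) / 2) *
        Real.exp (∑ j ∈ Finset.univ.filter (fun j : Fin (k+1) => i.succ < j), u j) *
        erfc (t - s i.succ) with hR
    have hupd : ∀ v : ℝ, ∀ l : Fin (k+1),
        ∑ j ∈ Finset.univ.filter (fun j => l < j), Function.update u 0 v j
        = ∑ j ∈ Finset.univ.filter (fun j => l < j), u j := by
      intro v l
      apply Finset.sum_congr rfl
      intro j hj
      simp only [Finset.mem_filter] at hj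
      have hj0 : j ≠ 0 := by
        have : (0 : Fin (k+1)) < j := lt_of_le_of_lt (Fin.zero_le l) hj.2
        exact Fin.pos_iff_ne_zero.mp this
      exact Function.update_of_ne hj0 _ _
    have hfun : (fun v : ℝ => H1 (k + 1) (Function.update u 0 v) s t)
        = fun v : ℝ => (1 - A / 2 * erfc (t - s 0) + R) +
            Real.exp v * (A / 2 * erfc (t - s 0)) := by
      funext v
      simp only [H1, Fin.sum_univ_succ, hupd v, Function.update_self]
      have hrest : ∀ i : Fin k, Function.update u 0 v i.succ = u i.succ := fun i =>
        Function.update_of_ne (Fin.succ_ne_zero i) _ _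
      simp only [hrest, ← hA, ← hR]
      ring
    rw [hfun]
    have hlim : Tendsto (fun v : ℝ => (1 - A / 2 * erfc (t - s 0) + R) +
        Real.exp v * (A / 2 * erfc (t - s 0))) atBot
        (nhds ((1 - A / 2 * erfc (t - s 0) + R) + 0 * (A / 2 * erfc (t - s 0)))) :=
      tendsto_const_nhds.add (Real.tendsto_exp_atBot.mul_const _)
    rw [zero_mul, add_zero] at hlim
    convert hlim using 2
    rw [hA, hR]
    exact ident k t u s
  · have := erfc_lt_two (t - s (Fin.last k)); linarith
  · intro i
    have h1 : (0:ℝ) < Real.exp (∑ j ∈ Finset.univ.filter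
        (fun j : Fin (k+1) => i.succ ≤ j), u j) / 2 := by positivity
    exact mul_pos h1 (by linarith [hE2 i])
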